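/- Let k be a field of characteristic zero, n > 1, λ ∈ k a primitive n-th root of unity, and let P = MvPolynomial (Fin m) k (m ≥ 2) carry a Poisson bracket ⁅·,·⁆ together with a linear Taft action datum (g, x). Then ⁅u₁,u₂⁆ = 0. Consequently, if m = 2, then the Poisson bracket is trivial: ⁅p,q⁆ = 0 for all p, q ∈ P. -/

import Mathlib

open MvPolynomial

/-- Decomposition of a multivariate polynomial: `p = p(with Xe0 ↦ 0) + X e0 * q`. -/
lemma taft_phi_decomp {k : Type*} [CommSemiring k] {m : ℕ} (e0 : Fin m)
    (p : MvPolynomial (Fin m) k) :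
    ∃ q, p = aeval (fun i => if i = e0 then 0 else X i) p + X e0 * q := by
  classical
  induction p using MvPolynomial.induction_on with
  | C r => exact ⟨0, by simp⟩
  | add p q hp hq =>
      obtain ⟨a, ha⟩ := hp
      obtain ⟨b, hb⟩ := hq
      refine ⟨a + b, ?_⟩
      rw [map_add]
      calc p + q = (aeval (fun i => if i = e0 then 0 else X i) p + X e0 * a)
            + (aeval (fun i => if i = e0 then 0 else X i) q + X e0 * b) := by rw [← ha, ← hb]
        _ = _ := by ring
  | mul_X p i hp =>
      obtain ⟨a, ha⟩ := hp
      by_cases hi : i = e0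
      · subst hi
        refine ⟨p, ?_⟩
        rw [map_mul, aeval_X, if_pos rfl, mul_zero, zero_add, mul_comm]
      · refine ⟨a * X i, ?_⟩
        rw [map_mul, aeval_X, if_neg hi]
        calc p * X i = (aeval (fun j => if j = e0 then 0 else X j) p + X e0 * a) * X i := by
              rw [← ha]
          _ = _ := by ring

/-- If a Taft algebra `T_n(λ)` acts linearly (in the standard form) on a Poisson polynomial
algebra `k[u₁,…,u_m]`, then `⁅u₁,u₂⁆ = 0`; consequently, if `m = 2` the bracket is trivial. -/
theorem taft_bracket_u1_u2 {k : Type*} [Field k] [CharZero k]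
    {m : ℕ} (hm : 2 ≤ m)
    {n : ℕ} (hn : 1 < n) {lam : k} (hlam : IsPrimitiveRoot lam n)
    (B : MvPolynomial (Fin m) k → MvPolynomial (Fin m) k → MvPolynomial (Fin m) k)
    (hB_addl : ∀ a b c, B (a + b) c = B a c + B b c)
    (hB_addr : ∀ a b c, B a (b + c) = B a b + B a c)
    (hB_smull : ∀ (r : k) (a b), B (r • a) b = r • B a b)
    (hB_smulr : ∀ (r : k) (a b), B a (r • b) = r • B a b)
    (hB_anti : ∀ a b, B a b = -B b a)
    (hB_jac : ∀ a b c, B a (B b c) + B b (B c a) + B c (B a b) = 0)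
    (hB_leib : ∀ a b c, B a (b * c) = B a b * c + b * B a c)
    (g : MvPolynomial (Fin m) k ≃ₐ[k] MvPolynomial (Fin m) k)
    (hg0 : g (X ⟨0, by omega⟩) = lam⁻¹ • X ⟨0, by omega⟩)
    (hgi : ∀ i : Fin m, i.val ≠ 0 → g (X i) = X i)
    (hgB : ∀ a b, g (B a b) = B (g a) (g b))
    (x : MvPolynomial (Fin m) k →ₗ[k] MvPolynomial (Fin m) k)
    (hx0 : x (X ⟨0, by omega⟩) = X ⟨1, by omega⟩)
    (hxi : ∀ i : Fin m, i.val ≠ 0 → x (X i) = 0)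
    (hx_mul : ∀ a b, x (a * b) = g a * x b + x a * b)
    (hxB : ∀ a b, x (B a b) = B (g a) (x b) + B (x a) b) :
    B (X ⟨0, by omega⟩) (X ⟨1, by omega⟩) = 0 ∧
      (m = 2 → ∀ p q : MvPolynomial (Fin m) k, B p q = 0) := by
  classical
  set e0 : Fin m := ⟨0, by omega⟩ with he0
  set e1 : Fin m := ⟨1, by omega⟩ with he1
  have hlam0 : lam ≠ 0 := hlam.ne_zero (by omega)
  have hlam1 : lam ≠ 1 := hlam.ne_one hn
  have hinv0 : lam⁻¹ ≠ 0 := inv_ne_zero hlam0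
  have hinvlam : lam⁻¹ * lam = 1 := inv_mul_cancel₀ hlam0
  have hC : (C lam⁻¹ : MvPolynomial (Fin m) k) * C lam = 1 := by
    rw [← map_mul, hinvlam, map_one]
  -- basic bracket facts
  have hB0r : ∀ a, B a 0 = 0 := by
    intro a
    have h := hB_addr a 0 0
    rw [add_zero] at h
    exact (left_eq_add.mp h)
  have hBaa : ∀ a, B a a = 0 := by
    intro a
    have h2 : (2 : k) • B a a = 0 := by
      rw [two_smul]
      nth_rewrite 1 [hB_anti a a]
      exact neg_add_cancel _
    rcases smul_eq_zero.mp h2 with h | h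
    · exact absurd h two_ne_zero
    · exact h
  -- e1 has nonzero index
  have he1ne : (e1 : Fin m).val ≠ 0 := by simp [he1]
  -- x kills the bracket c = B u v
  have hxc : x (B (X e0) (X e1)) = 0 := by
    rw [hxB, hx0, hxi e1 he1ne, hg0, hB0r, hBaa, add_zero]
  -- g eigenvalue
  have hgc : g (B (X e0) (X e1)) = lam⁻¹ • B (X e0) (X e1) := by
    rw [hgB, hg0, hgi e1 he1ne, hB_smull]
  -- the substitution hom
  set Φ : MvPolynomial (Fin m) k →ₐ[k] MvPolynomial (Fin m) k :=
    aeval (fun i => if i = e0 then 0 else X i) with hΦ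
  have hΦ0 : Φ (X e0) = 0 := by simp [hΦ]
  have hΦ1 : Φ (X e1) = X e1 := by
    rw [hΦ, aeval_X, if_neg]
    simp [he0, he1, Fin.ext_iff]
  have hΦg : ∀ p, Φ (g p) = Φ p := by
    have hcomp : Φ.comp g.toAlgHom = Φ := by
      apply MvPolynomial.algHom_ext
      intro i
      by_cases hi : i = e0
      · subst hi
        simp only [AlgHom.comp_apply, AlgEquiv.toAlgHom_eq_coe, AlgHom.coe_coe]
        change Φ (g (X e0)) = Φ (X e0)
        rw [hg0, map_smul, hΦ0, smul_zero]
      · have hiv : i.val ≠ 0 := by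
          intro h; exact hi (Fin.ext (by simp [he0, h]))
        simp only [AlgHom.comp_apply, AlgEquiv.toAlgHom_eq_coe, AlgHom.coe_coe]
        change Φ (g (X i)) = Φ (X i)
        rw [hgi i hiv]
    intro p
    exact DFunLike.congr_fun hcomp p
  have hX0ne : (X e0 : MvPolynomial (Fin m) k) ≠ 0 := X_ne_zero e0
  have hX1ne : (X e1 : MvPolynomial (Fin m) k) ≠ 0 := X_ne_zero e1
  -- the key descent lemma
  have key : ∀ N : ℕ, ∀ p : MvPolynomial (Fin m) k, degreeOf e0 p ≤ N →
      ∀ j : ℕ, g p = (lam⁻¹ * lam ^ j) • p →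
      lam⁻¹ • (X e0 * x p) = (-(∑ i ∈ Finset.range j, lam ^ i)) • (X e1 * p) →
      p = 0 := by
    intro N
    induction N using Nat.strong_induction_on with
    | _ N ih =>
      intro p hdeg j hgp hxp
      by_cases hp0 : p = 0
      · exact hp0
      -- Step 1: Φ p = 0
      have hΦp : Φ p = 0 := by
        by_cases hone : lam⁻¹ * lam ^ j = 1
        · -- then lam ^ j = lam, and the geometric sum is nonzero
          have hpow : lam ^ j = lam := by
            have h := congrArg (lam * ·) hone
            simpa [← mul_assoc, mul_comm lam lam⁻¹, hinvlam] using h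
          have hsum : (∑ i ∈ Finset.range j, lam ^ i) ≠ 0 := by
            intro h
            have h2 := geom_sum_mul lam j
            rw [h, zero_mul, hpow] at h2
            exact (sub_ne_zero.mpr hlam1) h2.symm
          have h := congrArg Φ hxp
          rw [map_smul, map_smul, map_mul, map_mul, hΦ0, hΦ1, zero_mul, smul_zero] at h
          rcases smul_eq_zero.mp h.symm with h' | h'
          · exact absurd (neg_eq_zero.mp h') hsum
          · rcases mul_eq_zero.mp h' with h'' | h''
            · exact absurd h'' hX1ne
            · exact h''
        · have h1 := hΦg p
          rw [hgp, map_smul] at h1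
          have h2 : (lam⁻¹ * lam ^ j - 1) • Φ p = 0 := by
            rw [sub_smul, one_smul, h1, sub_self]
          rcases smul_eq_zero.mp h2 with h' | h'
          · exact absurd (sub_eq_zero.mp h') hone
          · exact h'
      obtain ⟨q, hq⟩ := taft_phi_decomp e0 p
      rw [← hΦ, hΦp, zero_add] at hq
      by_cases hq0 : q = 0
      · rw [hq, hq0, mul_zero]
      -- degree drop
      have hdq : degreeOf e0 q + 1 ≤ N := by
        have hd := (degreeOf_mul_X_eq_degreeOf_add_one_iff e0 q).mpr hq0
        have hpq : degreeOf e0 p = degreeOf e0 q + 1 := by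
          rw [hq, mul_comm, hd]
        omega
      -- eigen equation for q
      rw [hq] at hgp hxp
      rw [map_mul, hg0] at hgp
      rw [hx_mul, hg0, hx0] at hxp
      simp only [smul_eq_C_mul, map_mul, map_pow, map_neg] at hgp hxp
      have hgq : g q = (lam⁻¹ * lam ^ (j + 1)) • q := by
        rw [smul_eq_C_mul, map_mul, map_pow]
        apply mul_left_cancel₀ hX0ne
        linear_combination (C lam : MvPolynomial (Fin m) k) * hgp - (X e0 * g q) * hC
      have hxq : lam⁻¹ • (X e0 * x q)
          = (-(∑ i ∈ Finset.range (j + 1), lam ^ i)) • (X e1 * q) := by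
        rw [geom_sum_succ]
        simp only [smul_eq_C_mul, map_neg, map_add, map_mul, map_one]
        apply mul_left_cancel₀ hX0ne
        linear_combination (C lam : MvPolynomial (Fin m) k) * hxp
          - (C lam⁻¹ * X e0 ^ 2 * x q + X e0 * X e1 * q) * hC
      have hq0' : q = 0 := ih (degreeOf e0 q) (by omega) q le_rfl (j + 1) hgq hxq
      exact absurd hq0' hq0
  -- conclude the first statement
  have hc : B (X e0) (X e1) = 0 := by
    apply key (degreeOf e0 (B (X e0) (X e1))) _ le_rfl 0
    · rw [pow_zero, mul_one]; exact hgc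
    · rw [hxc, mul_zero, smul_zero, Finset.range_zero, Finset.sum_empty, neg_zero, zero_smul]
  refine ⟨hc, ?_⟩
  -- second statement
  intro hm2
  subst hm2
  have hB1 : ∀ a, B a 1 = 0 := by
    intro a
    have h := hB_leib a 1 1
    rw [mul_one, one_mul, mul_one] at h
    exact (left_eq_add.mp h)
  have hBC : ∀ a r, B a (C r) = 0 := by
    intro a r
    have : (C r : MvPolynomial (Fin 2) k) = r • 1 := by
      rw [smul_eq_C_mul, mul_one]
    rw [this, hB_smulr, hB1, smul_zero]
  have hgen : ∀ i j : Fin 2, B (X i) (X j) = 0 := by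
    intro i j
    fin_cases i <;> fin_cases j
    · exact hBaa _
    · exact hc
    · rw [hB_anti]
      rw [hc, neg_zero]
    · exact hBaa _
  have h1 : ∀ (i : Fin 2) p, B (X i) p = 0 := by
    intro i p
    induction p using MvPolynomial.induction_on with
    | C r => exact hBC _ r
    | add p q hp hq => rw [hB_addr, hp, hq, add_zero]
    | mul_X p j hp => rw [hB_leib, hp, zero_mul, zero_add, hgen, mul_zero]
  intro p q
  induction p using MvPolynomial.induction_on with
  | C r =>
      rw [hB_anti, hBC, neg_zero]
  | add p1 p2 hp1 hp2 => rw [hB_addl, hp1, hp2, add_zero]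
  | mul_X p i hp =>
      rw [hB_anti, hB_leib, hB_anti q p, hp, neg_zero, zero_mul, zero_add,
        hB_anti q (X i), h1, neg_zero, mul_zero, neg_zero]
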